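/- arXiv:2408.01367 — 4 statements merged into one kernel-verified Lean document; each statement's English description precedes it below -/
import Mathlib

section
/- Let Ω ⊂ ℝ^d be a compact set and let μ, ν be Borel probability measures on Ω. If L(μ)(a, c) = L(ν)(a, c) for all a ∈ ℝ^d and all c ∈ ℝ, then μ = ν; that is, the generalized Laplace-like transform μ ↦ L(μ) is injective on probability measures on Ω. -/
open MeasureTheory Set Filter
open scoped ENNReal RealInnerProductSpace BigOperators Topology

noncomputable section

/-- Euclidean space `ℝ^n`. -/
abbrev E (n : ℕ) : Type := EuclideanSpace ℝ (Fin n)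

/-- Build a vector of `ℝ^n` from its coordinates. -/
def toE {n : ℕ} (f : Fin n → ℝ) : E n := (EuclideanSpace.equiv (Fin n) ℝ).symm f

/-- Parameters `θ = (Wʰ, Qʰ, Kʰ, Vʰ)ₕ` of a multi-head attention layer with token
dimension `m`, head dimension `dh`, key/query dimension `k` and `H` heads.
(Matrices are represented as linear maps.) -/
structure AttentionParams (m dh k H : ℕ) where
  W : Fin H → (E dh →L[ℝ] E m)
  Q : Fin H → (E m →L[ℝ] E k)
  K : Fin H → (E m →L[ℝ] E k)
  V : Fin H → (E m →L[ℝ] E dh)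

/-- The (unmasked) multi-head self-attention in-context map `Γ_θ(μ, x)`. -/
def attention {m dh k H : ℕ} (θ : AttentionParams m dh k H)
    (μ : Measure (E m)) (x : E m) : E m :=
  x + ∑ h : Fin H, θ.W h (∫ y,
      (Real.exp (⟪θ.Q h x, θ.K h y⟫ / Real.sqrt k) /
        ∫ z, Real.exp (⟪θ.Q h x, θ.K h z⟫ / Real.sqrt k) ∂μ) • θ.V h y ∂μ)

/-- In-context maps `(μ, x) ↦ G(μ, x)`. -/
abbrev ICMap (m m' : ℕ) : Type := Measure (E m) → E m → E m'

/-- In-context composition `(G₂ ⋄ G₁)(μ, x) = G₂(G₁(μ, ·)♯μ, G₁(μ, x))`. -/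
def ictxComp {m m' m'' : ℕ} (G₂ : ICMap m' m'') (G₁ : ICMap m m') : ICMap m m'' :=
  fun μ x => G₂ (μ.map (G₁ μ)) (G₁ μ x)

/-- A context-free (tokenwise) layer, viewed as an in-context map. -/
def ctxFree {m m' : ℕ} (F : E m → E m') : ICMap m m' := fun _ x => F x

/-- `IsAttnChain dmax Hmax G` holds iff `G = F_{ξ_L} ⋄ Γ_{θ_L} ⋄ ⋯ ⋄ F_{ξ_1} ⋄ Γ_{θ_1}`
for some `L ≥ 1`, where each `Γ_{θ_ℓ}` is a multi-head self-attention with token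
dimension `≤ dmax`, head and key dimensions `1`, and at most `Hmax` heads, and each
`F_{ξ_ℓ}` is a context-free tokenwise layer. -/
inductive IsAttnChain (dmax Hmax : ℕ) : {m m' : ℕ} → ICMap m m' → Prop
  | base {m m' H : ℕ} (hm : m ≤ dmax) (hH : H ≤ Hmax)
      (θ : AttentionParams m 1 1 H) (F : E m → E m') :
      IsAttnChain dmax Hmax (ictxComp (ctxFree F) (attention θ))
  | step {m m' m'' H : ℕ} {T : ICMap m m'} (hT : IsAttnChain dmax Hmax T)
      (hm : m' ≤ dmax) (hH : H ≤ Hmax)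
      (θ : AttentionParams m' 1 1 H) (F : E m' → E m'') :
      IsAttnChain dmax Hmax (ictxComp (ctxFree F) (ictxComp (attention θ) T))

/-- The elementary in-context map `γ_λ`, `λ = (a, b, c, v)`. -/
def elemGamma {d : ℕ} (a : E d) (b c v : ℝ) (μ : Measure (E d)) (x : E d) : ℝ :=
  ⟪x, a⟫ + b + ∫ y,
      (Real.exp (c * (⟪x, a⟫ + b) * (⟪y, a⟫ + b)) * (v * (⟪a, y⟫ + b)) /
        ∫ z, Real.exp (c * (⟪x, a⟫ + b) * (⟪z, a⟫ + b)) ∂μ) ∂μ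

/-- Component-wise (Hadamard) product `v₁ ⊙ ⋯ ⊙ v_T` of vectors in `ℝ^n`. -/
def hprod {n T : ℕ} (f : Fin T → E n) : E n := toE fun i => ∏ t, f t i

/-- Nested application `Φ(v_T, Φ(v_{T-1}, ⋯ Φ(v_1, 𝟏) ⋯ ))`. -/
def nestPhi {n : ℕ} (Φ : E n × E n → E n) : (T : ℕ) → (Fin T → E n) → E n
  | 0, _ => toE fun _ => 1
  | T + 1, v => Φ (v (Fin.last T), nestPhi Φ T fun t => v t.castSucc)

/-- Composition of a list of in-context maps; the head of the list acts first. -/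
def compList {m : ℕ} : List (ICMap m m) → ICMap m m
  | [] => fun _ x => x
  | l :: ls => ictxComp (compList ls) l

/-! ### Masked (space-time) framework -/

/-- Time marginal `μ̄ = P♯μ`, `P(x, t) = t`. -/
def timeMarg {m : ℕ} (μ : Measure (E m × ℝ)) : Measure ℝ := μ.map Prod.snd

/-- Squared 2-Wasserstein distance `W₂(α, β)²`, as an infimum over couplings. -/
def W2sq {m : ℕ} (α β : Measure (E m)) : ℝ≥0∞ :=
  sInf {c | ∃ π : Measure (E m × E m), π.map Prod.fst = α ∧ π.map Prod.snd = β ∧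
      c = ∫⁻ p, edist p.1 p.2 ^ 2 ∂π}

/-- `μ ∈ Lip_C^σ(Ω̃)`: a probability measure on `Ω̃ = Ω × [0,1]` admitting a
disintegration `μ(dx, ds) = μ(dx|s) μ̄(ds)` whose conditional `s ↦ μ(·|s)` is
`C`-Lipschitz for `W₂`, and with `μ̄({0}) ≥ σ`. -/
def IsLipCtx {m : ℕ} (Ω : Set (E m)) (C σ : ℝ) (μ : Measure (E m × ℝ)) : Prop :=
  IsProbabilityMeasure μ ∧ μ ((Ω ×ˢ Icc (0:ℝ) 1)ᶜ) = 0 ∧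
    ENNReal.ofReal σ ≤ timeMarg μ {0} ∧
    ∃ κ : ℝ → Measure (E m), Measurable κ ∧ (∀ s, IsProbabilityMeasure (κ s)) ∧
      (∀ s, κ s Ωᶜ = 0) ∧
      μ = (timeMarg μ).bind (fun s => (κ s).map fun x => (x, s)) ∧
      ∀ s ∈ Icc (0:ℝ) 1, ∀ t ∈ Icc (0:ℝ) 1,
        W2sq (κ s) (κ t) ≤ ENNReal.ofReal (C * |s - t|) ^ 2

/-- The masked measure `μ_t = (1_{[0,t]} / μ̄([0,t])) · μ` (restriction of the time
variable to `[0, t]`, renormalized). -/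
def maskedM {m : ℕ} (μ : Measure (E m × ℝ)) (t : ℝ) : Measure (E m × ℝ) :=
  (μ (univ ×ˢ Icc 0 t))⁻¹ • μ.restrict (univ ×ˢ Icc 0 t)

/-- The masked measure, as a probability measure (junk value `μ` itself when
`μ̄([0,t]) = 0`; for `μ ∈ Lip_C^σ` and `t ∈ [0,1]` one has `μ̄([0,t]) ≥ σ > 0`). -/
def maskedP {m : ℕ} (μ : ProbabilityMeasure (E m × ℝ)) (t : ℝ) :
    ProbabilityMeasure (E m × ℝ) :=
  if h : μ.toMeasure (univ ×ˢ Icc 0 t) = 0 then μ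
  else ⟨maskedM μ.toMeasure t, ⟨by
    simp only [maskedM, Measure.smul_apply, Measure.restrict_apply_univ, smul_eq_mul]
    exact ENNReal.inv_mul_cancel h (measure_ne_top _ _)⟩⟩

/-- Space-time in-context maps `(μ, (x, t)) ↦ Λ(μ, x, t)`. -/
abbrev STMap (m m' : ℕ) : Type := Measure (E m × ℝ) → E m × ℝ → E m'

/-- Masked in-context composition
`(Γ₂ ⋄ Γ₁)(μ, x, t) = Γ₂((Γ₁(μ), Id)♯μ, Γ₁(μ, x, t), t)`. -/
def stComp {m m' m'' : ℕ} (Γ₂ : STMap m' m'') (Γ₁ : STMap m m') : STMap m m'' :=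
  fun μ p => Γ₂ (μ.map fun q => (Γ₁ μ q, q.2)) (Γ₁ μ p, p.2)

/-- A context-free layer acting tokenwise in space, as a space-time map. -/
def stCtxFree {m m' : ℕ} (F : E m → E m') : STMap m m' := fun _ p => F p.1

/-- The masked multi-head self-attention in-context map `Γ_θ(μ, x, t)`. -/
def maskedAttention {m dh k H : ℕ} (θ : AttentionParams m dh k H)
    (μ : Measure (E m × ℝ)) (p : E m × ℝ) : E m :=
  p.1 + ∑ h : Fin H, θ.W h (∫ y,
      ((Real.exp (⟪θ.Q h p.1, θ.K h y.1⟫ / Real.sqrt k) *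
          (Icc (0:ℝ) p.2).indicator 1 y.2) /
        ∫ z, Real.exp (⟪θ.Q h p.1, θ.K h z.1⟫ / Real.sqrt k) *
          (Icc (0:ℝ) p.2).indicator 1 z.2 ∂μ) • θ.V h y.1 ∂μ)

/-- The unmasked attention formula on space-time measures (no time masking). -/
def attentionST {m dh k H : ℕ} (θ : AttentionParams m dh k H)
    (μ : Measure (E m × ℝ)) (x : E m) : E m :=
  x + ∑ h : Fin H, θ.W h (∫ y,
      (Real.exp (⟪θ.Q h x, θ.K h y.1⟫ / Real.sqrt k) /
        ∫ z, Real.exp (⟪θ.Q h x, θ.K h z.1⟫ / Real.sqrt k) ∂μ) • θ.V h y.1 ∂μ)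

/-- Causality of a space-time in-context map: `Λ(μ, x, t) = Λ(μ_t, x, t)`. -/
def IsCausalM {m d' : ℕ} (Ω : Set (E m)) (C σ : ℝ) (Λ : STMap m d') : Prop :=
  ∀ μ, IsLipCtx Ω C σ μ → ∀ x ∈ Ω, ∀ t ∈ Icc (0:ℝ) 1,
    Λ μ (x, t) = Λ (maskedM μ t) (x, t)

/-- Identifiability: `μ_t = μ_{t'}` implies `Λ(μ_t, ·, t) = Λ(μ_{t'}, ·, t')`. -/
def IsIdentifiableM {m d' : ℕ} (Ω : Set (E m)) (C σ : ℝ) (Λ : STMap m d') : Prop :=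
  ∀ μ, IsLipCtx Ω C σ μ → ∀ t ∈ Icc (0:ℝ) 1, ∀ t' ∈ Icc (0:ℝ) 1,
    maskedM μ t = maskedM μ t' →
    ∀ x ∈ Ω, Λ (maskedM μ t) (x, t) = Λ (maskedM μ t') (x, t')

/-- Space-time in-context maps taking a probability measure (carrying the weak*
topology) as context. -/
abbrev PSTMap (m d' : ℕ) : Type := ProbabilityMeasure (E m × ℝ) → E m × ℝ → E d'

/-- Causality, probability-measure version. -/
def IsCausalP {m d' : ℕ} (Ω : Set (E m)) (C σ : ℝ) (Λ : PSTMap m d') : Prop :=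
  ∀ μ : ProbabilityMeasure (E m × ℝ), IsLipCtx Ω C σ μ.toMeasure →
    ∀ x ∈ Ω, ∀ t ∈ Icc (0:ℝ) 1, Λ μ (x, t) = Λ (maskedP μ t) (x, t)

/-- Identifiability, probability-measure version. -/
def IsIdentifiableP {m d' : ℕ} (Ω : Set (E m)) (C σ : ℝ) (Λ : PSTMap m d') : Prop :=
  ∀ μ : ProbabilityMeasure (E m × ℝ), IsLipCtx Ω C σ μ.toMeasure →
    ∀ t ∈ Icc (0:ℝ) 1, ∀ t' ∈ Icc (0:ℝ) 1,
      maskedP μ t = maskedP μ t' →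
      ∀ x ∈ Ω, Λ (maskedP μ t) (x, t) = Λ (maskedP μ t') (x, t')

/-- `e(μ̄) = max supp(μ̄)`: the endpoint of the support of the time marginal. -/
def timeEnd {m : ℕ} (μ : Measure (E m × ℝ)) : ℝ :=
  sSup {r : ℝ | ∀ ε > 0, timeMarg μ (Ioo (r - ε) (r + ε)) ≠ 0}

/-- The reduced space `X_C^σ = {(μ_t, x) : μ ∈ Lip_C^σ(Ω̃), x ∈ Ω, t ∈ [0,1]}`. -/
def XCset {d : ℕ} (Ω : Set (E d)) (C σ : ℝ) :
    Set (ProbabilityMeasure (E d × ℝ) × E d) :=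
  {p | ∃ μ : ProbabilityMeasure (E d × ℝ), IsLipCtx Ω C σ μ.toMeasure ∧
      ∃ t ∈ Icc (0:ℝ) 1, ∃ x ∈ Ω, p = (maskedP μ t, x)}

/-- Deep masked transformers `F_{ξ_L} ⋄ Γ_{θ_L} ⋄ ⋯ ⋄ F_{ξ_1} ⋄ Γ_{θ_1}` with masked
attentions of token dimension `≤ dmax`, head and key dimensions `1`, and `≤ Hmax`
heads. -/
inductive IsMaskedChain (dmax Hmax : ℕ) : {m m' : ℕ} → STMap m m' → Prop
  | base {m m' H : ℕ} (hm : m ≤ dmax) (hH : H ≤ Hmax)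
      (θ : AttentionParams m 1 1 H) (F : E m → E m') :
      IsMaskedChain dmax Hmax (stComp (stCtxFree F) (maskedAttention θ))
  | step {m m' m'' H : ℕ} {T : STMap m m'} (hT : IsMaskedChain dmax Hmax T)
      (hm : m' ≤ dmax) (hH : H ≤ Hmax)
      (θ : AttentionParams m' 1 1 H) (F : E m' → E m'') :
      IsMaskedChain dmax Hmax (stComp (stCtxFree F) (stComp (maskedAttention θ) T))

/-- Reduced in-context maps `(ν, x) ↦ Λ̄(ν, x)`. -/
abbrev RMap (m m' : ℕ) : Type := Measure (E m × ℝ) → E m → E m'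

/-- Composition of reduced maps; the push-forward keeps the time fixed. -/
def rComp {m m' m'' : ℕ} (R₂ : RMap m' m'') (R₁ : RMap m m') : RMap m m'' :=
  fun ν x => R₂ (ν.map fun q => (R₁ ν q.1, q.2)) (R₁ ν x)

/-- Context-free tokenwise layer as a reduced map. -/
def rCtxFree {m m' : ℕ} (F : E m → E m') : RMap m m' := fun _ x => F x

/-- Reduced map `Γ̄_θ(ν, x) = Γ_θ(ν, x, e(ν̄))` of the masked attention. -/
def reducedAttention {m dh k H : ℕ} (θ : AttentionParams m dh k H) : RMap m m :=
  fun ν x => maskedAttention θ ν (x, timeEnd ν)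

/-- Deep transformers built from reduced masked attentions and context-free layers. -/
inductive IsReducedChain (dmax Hmax : ℕ) : {m m' : ℕ} → RMap m m' → Prop
  | base {m m' H : ℕ} (hm : m ≤ dmax) (hH : H ≤ Hmax)
      (θ : AttentionParams m 1 1 H) (F : E m → E m') :
      IsReducedChain dmax Hmax (rComp (rCtxFree F) (reducedAttention θ))
  | step {m m' m'' H : ℕ} {T : RMap m m'} (hT : IsReducedChain dmax Hmax T)
      (hm : m' ≤ dmax) (hH : H ≤ Hmax)
      (θ : AttentionParams m' 1 1 H) (F : E m' → E m'') :
      IsReducedChain dmax Hmax (rComp (rCtxFree F) (rComp (reducedAttention θ) T))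

end

/-! `L(μ)(a, ·)` is the derivative of the cumulant generating function `c ↦ log ∫ e^{c⟨a,y⟩} dμ`
of the projection `⟨a, ·⟩`, which vanishes at `0`; so the hypothesis determines the moment
generating function of every projection. On a compact set these are finite on all of `ℝ`, hence
determine the complex moment generating function, in particular the characteristic function of `μ`
at `a`, and characteristic functions separate finite measures. -/

namespace ProbabilityTheory

variable {Ω Ω' : Type*} {mΩ : MeasurableSpace Ω} {mΩ' : MeasurableSpace Ω'}
  {X : Ω → ℝ} {Y : Ω' → ℝ} {μ : Measure Ω} {μ' : Measure Ω'}

lemma integrableExpSet_eq_univ_of_continuous [TopologicalSpace Ω] [CompactSpace Ω]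
    [OpensMeasurableSpace Ω] [IsFiniteMeasure μ] (hX : Continuous X) :
    integrableExpSet X μ = univ :=
  eq_univ_of_forall fun _ =>
    (Real.continuous_exp.comp (continuous_const.mul hX)).integrable_of_hasCompactSupport
      (.of_compactSpace _)

lemma cgf_eq_of_deriv_cgf_eq [IsProbabilityMeasure μ] [IsProbabilityMeasure μ']
    (hX : integrableExpSet X μ = univ) (hY : integrableExpSet Y μ' = univ)
    (h : ∀ t, deriv (cgf X μ) t = deriv (cgf Y μ') t) : cgf X μ = cgf Y μ' := by
  have hXd : Differentiable ℝ (cgf X μ) := fun t =>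
    (analyticAt_cgf (by simp [hX])).differentiableAt
  have hYd : Differentiable ℝ (cgf Y μ') := fun t =>
    (analyticAt_cgf (by simp [hY])).differentiableAt
  have hconst := is_const_of_deriv_eq_zero (hXd.sub hYd)
    (fun t => by rw [deriv_sub (hXd t) (hYd t), h, sub_self])
  funext t
  exact sub_eq_zero.mp (by simpa [cgf_zero] using hconst t 0)

lemma mgf_eq_of_deriv_cgf_eq [IsProbabilityMeasure μ] [IsProbabilityMeasure μ']
    (hX : integrableExpSet X μ = univ) (hY : integrableExpSet Y μ' = univ)
    (h : ∀ t, deriv (cgf X μ) t = deriv (cgf Y μ') t) : mgf X μ = mgf Y μ' := by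
  funext t
  rw [← exp_cgf (hX.symm ▸ mem_univ t : t ∈ integrableExpSet X μ),
    ← exp_cgf (hY.symm ▸ mem_univ t : t ∈ integrableExpSet Y μ'),
    cgf_eq_of_deriv_cgf_eq hX hY h]

lemma complexMGF_eq_of_mgf_eq [IsProbabilityMeasure μ] (hX : integrableExpSet X μ = univ)
    (h : mgf X μ = mgf Y μ') : complexMGF X μ = complexMGF Y μ' :=
  funext fun _ => eqOn_complexMGF_of_mgf h (by simp [hX])

end ProbabilityTheory

open ProbabilityTheory

lemma MeasureTheory.Measure.ext_of_complexMGF_inner_eq {Ω F : Type*} {mΩ : MeasurableSpace Ω}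
    [NormedAddCommGroup F] [InnerProductSpace ℝ F] [CompleteSpace F] [SecondCountableTopology F]
    [MeasurableSpace F] [BorelSpace F] {f : Ω → F} (hf : MeasurableEmbedding f)
    {μ ν : Measure Ω} [IsFiniteMeasure μ] [IsFiniteMeasure ν]
    (h : ∀ a, complexMGF (fun ω => ⟪a, f ω⟫) μ = complexMGF (fun ω => ⟪a, f ω⟫) ν) :
    μ = ν := by
  refine hf.map_injective (Measure.ext_of_charFun (funext fun a => ?_))
  have ha := congrFun (h a) Complex.I
  simp only [complexMGF, mul_comm Complex.I] at ha
  rw [charFun_apply, charFun_apply, integral_map hf.measurable.aemeasurable (by fun_prop),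
    integral_map hf.measurable.aemeasurable (by fun_prop)]
  simpa only [real_inner_comm a] using ha

/-- **Injectivity of the generalized Laplace-like transform.** If two Borel probability
measures `μ, ν` on a compact `Ω ⊆ ℝ^d` satisfy `L(μ)(a, c) = L(ν)(a, c)` for all
`a ∈ ℝ^d`, `c ∈ ℝ`, where
`L(μ)(a, c) = (∫ e^{c⟨a,y⟩} ⟨a,y⟩ dμ(y)) / (∫ e^{c⟨a,z⟩} dμ(z))`, then `μ = ν`. -/
theorem laplace_injective {d : ℕ} (Ω : Set (E d)) (hΩ : IsCompact Ω)
    (μ ν : Measure Ω) [IsProbabilityMeasure μ] [IsProbabilityMeasure ν]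
    (h : ∀ (a : E d) (c : ℝ),
      (∫ y, Real.exp (c * ⟪a, (y : E d)⟫) * ⟪a, (y : E d)⟫ ∂μ) /
          (∫ z, Real.exp (c * ⟪a, (z : E d)⟫) ∂μ) =
        (∫ y, Real.exp (c * ⟪a, (y : E d)⟫) * ⟪a, (y : E d)⟫ ∂ν) /
          (∫ z, Real.exp (c * ⟪a, (z : E d)⟫) ∂ν)) :
    μ = ν := by
  have : CompactSpace Ω := isCompact_iff_compactSpace.mp hΩ
  have hexp : ∀ (ρ : Measure Ω) [IsFiniteMeasure ρ] (a : E d),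
      integrableExpSet (fun y : Ω => ⟪a, (y : E d)⟫) ρ = univ := fun ρ _ a =>
    integrableExpSet_eq_univ_of_continuous (continuous_const.inner continuous_subtype_val)
  refine Measure.ext_of_complexMGF_inner_eq (.subtype_coe hΩ.isClosed.measurableSet) fun a =>
    complexMGF_eq_of_mgf_eq (hexp μ a) (mgf_eq_of_deriv_cgf_eq (hexp μ a) (hexp ν a) fun c => ?_)
  rw [deriv_cgf (by simp [hexp]), deriv_cgf (by simp [hexp])]
  simpa only [mgf, mul_comm (Real.exp _)] using h a c
end

section
/- Let Ω ⊂ ℝ be a compact set and let μ, ν be Borel probability measures on Ω. If L₁(μ)(c) = L₁(ν)(c) for every c ∈ ℝ, then μ = ν, where L₁(μ)(c) = ∫ e^{cy} y dμ(y) / ∫ e^{cz} dμ(z). -/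
open MeasureTheory Set Filter
open scoped ENNReal RealInnerProductSpace BigOperators Topology

/-!
`L₁(μ)` is the logarithmic derivative of the moment generating function
`c ↦ ∫ e^{cy} dμ(y)`. Two functions that never vanish, have the same logarithmic derivative
and agree at `0` are equal, so `μ` and `ν` have the same moment generating function. On a
compact set it is finite on all of `ℝ`, hence extends to an entire function whose restriction
to `iℝ` is the characteristic function, which determines the measure.
-/

open ProbabilityTheory Real

theorem eq_of_logDeriv_eq {𝕜 : Type*} [RCLike 𝕜] {f g : 𝕜 → 𝕜}
    (hf : Differentiable 𝕜 f) (hg : Differentiable 𝕜 g) (hf0 : ∀ x, f x ≠ 0)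
    (hg0 : ∀ x, g x ≠ 0) (h : logDeriv f = logDeriv g) {x₀ : 𝕜} (h₀ : f x₀ = g x₀) :
    f = g := by
  have hderiv : ∀ x, deriv (f / g) x = 0 := fun x ↦ by
    have hfg : deriv f x * g x = f x * deriv g x := by
      have := congrFun h x
      rw [logDeriv_apply, logDeriv_apply, div_eq_div_iff (hf0 x) (hg0 x)] at this
      linear_combination this
    rw [((hf x).hasDerivAt.div (hg x).hasDerivAt (hg0 x)).deriv, hfg, sub_self, zero_div]
  funext x
  have hconst := is_const_of_deriv_eq_zero (hf.div hg hg0) hderiv x x₀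
  rwa [Pi.div_apply, Pi.div_apply, h₀, div_self (hg0 x₀), div_eq_one_iff_eq (hg0 x)] at hconst

namespace ProbabilityTheory

variable {Ω Ω' : Type*} {m : MeasurableSpace Ω} {m' : MeasurableSpace Ω'}
  {X : Ω → ℝ} {Y : Ω' → ℝ} {μ : Measure Ω} {μ' : Measure Ω'}

lemma integrableExpSet_eq_univ_of_abs_le [IsFiniteMeasure μ] (hX : AEMeasurable X μ) {C : ℝ}
    (hC : ∀ᵐ ω ∂μ, |X ω| ≤ C) : integrableExpSet X μ = univ := by
  refine eq_univ_of_forall fun t ↦ Integrable.of_bound (by fun_prop) (exp (|t| * C)) ?_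
  filter_upwards [hC] with ω hω
  rw [norm_of_nonneg (exp_nonneg _), exp_le_exp]
  calc t * X ω ≤ |t| * |X ω| := by rw [← abs_mul]; exact le_abs_self _
    _ ≤ |t| * C := by gcongr

lemma hasDerivAt_mgf_of_integrableExpSet_eq_univ (h : integrableExpSet X μ = univ) (t : ℝ) :
    HasDerivAt (mgf X μ) μ[fun ω ↦ X ω * exp (t * X ω)] t :=
  hasDerivAt_mgf (by simp [h])

lemma logDeriv_mgf [IsProbabilityMeasure μ] (h : integrableExpSet X μ = univ) (t : ℝ) :
    logDeriv (mgf X μ) t = μ[fun ω ↦ X ω * exp (t * X ω)] / mgf X μ t := by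
  rw [logDeriv_apply, (hasDerivAt_mgf_of_integrableExpSet_eq_univ h t).deriv]

lemma mgf_eq_of_logDeriv_eq [IsProbabilityMeasure μ] [IsProbabilityMeasure μ']
    (hX : integrableExpSet X μ = univ) (hY : integrableExpSet Y μ' = univ)
    (h : logDeriv (mgf X μ) = logDeriv (mgf Y μ')) : mgf X μ = mgf Y μ' := by
  refine eq_of_logDeriv_eq (fun t ↦ ?_) (fun t ↦ ?_) (fun t ↦ (mgf_pos ?_).ne')
    (fun t ↦ (mgf_pos ?_).ne') h (x₀ := 0) (by rw [mgf_zero, mgf_zero])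
  · exact (hasDerivAt_mgf_of_integrableExpSet_eq_univ hX t).differentiableAt
  · exact (hasDerivAt_mgf_of_integrableExpSet_eq_univ hY t).differentiableAt
  · exact integrable_of_mem_integrableExpSet (by simp [hX])
  · exact integrable_of_mem_integrableExpSet (by simp [hY])

theorem _root_.MeasureTheory.Measure.map_eq_of_mgf_eq [IsProbabilityMeasure μ]
    [IsFiniteMeasure μ'] (hX : AEMeasurable X μ) (hY : AEMeasurable Y μ')
    (hXexp : integrableExpSet X μ = univ) (h : mgf X μ = mgf Y μ') : μ.map X = μ'.map Y :=
  Measure.ext_of_complexMGF_eq hX hY <| funext fun _ ↦ eqOn_complexMGF_of_mgf h (by simp [hXexp])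

end ProbabilityTheory

/-- **Injectivity of the one-dimensional Laplace-like transform.** If two Borel
probability measures `μ, ν` on a compact `Ω ⊆ ℝ` satisfy `L₁(μ)(c) = L₁(ν)(c)` for all
`c ∈ ℝ`, where `L₁(μ)(c) = (∫ e^{cy} y dμ(y)) / (∫ e^{cz} dμ(z))`, then `μ = ν`. -/
theorem laplace_injective_1d (Ω : Set ℝ) (hΩ : IsCompact Ω)
    (μ ν : Measure Ω) [IsProbabilityMeasure μ] [IsProbabilityMeasure ν]
    (h : ∀ c : ℝ,
      (∫ y, Real.exp (c * (y : ℝ)) * (y : ℝ) ∂μ) / (∫ z, Real.exp (c * (z : ℝ)) ∂μ) =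
        (∫ y, Real.exp (c * (y : ℝ)) * (y : ℝ) ∂ν) / (∫ z, Real.exp (c * (z : ℝ)) ∂ν)) :
    μ = ν := by
  obtain ⟨C, hC⟩ := hΩ.isBounded.exists_norm_le
  have hexp : ∀ ρ : Measure Ω, [IsProbabilityMeasure ρ] → integrableExpSet (↑) ρ = univ :=
    fun ρ _ ↦ integrableExpSet_eq_univ_of_abs_le measurable_subtype_coe.aemeasurable
      (.of_forall fun y ↦ hC y y.2)
  have hmgf : mgf (↑) μ = mgf (↑) ν := by
    refine mgf_eq_of_logDeriv_eq (hexp μ) (hexp ν) (funext fun c ↦ ?_)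
    simpa only [logDeriv_mgf (hexp _), mgf, mul_comm] using h c
  exact (MeasurableEmbedding.subtype_coe hΩ.isClosed.measurableSet).map_injective <|
    Measure.map_eq_of_mgf_eq measurable_subtype_coe.aemeasurable
      measurable_subtype_coe.aemeasurable (hexp μ) hmgf
end

section
/- Let Ω̃ = Ω × [0,1] with Ω ⊂ ℝ^d compact, let C > 0 and σ ∈ (0,1), and let Γ₁ be a causal space-time in-context map with values in ℝ^d. Then for every μ ∈ Lip_C^σ(Ω̃) and every t ∈ [0,1], the masked measure of the push-forward equals the push-forward of the masked measure: [(Γ₁(μ), Id)_♯ μ]_t = (Γ₁(μ_t), Id)_♯ μ_t, where (Γ₁(μ), Id)(x, s) = (Γ₁(μ, x, s), s) and the masking of the pushed-forward measure is taken with respect to its time marginal (which coincides with μ̄). -/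
open MeasureTheory Set Filter
open scoped ENNReal RealInnerProductSpace BigOperators Topology

/-!
The map `q ↦ (Γ₁(ν, q), q.2)` keeps the time coordinate, so pushing forward along it commutes
with restricting time to `[0, t]` and renormalising. It remains to see that `Γ₁(μ, ·)` and
`Γ₁(μ_t, ·)` agree `μ_t`-almost everywhere: at a point `(x, s)` with `s ≤ t`, causality applied
to `μ` and to `μ_t` turns both into `Γ₁(μ_s, x, s)`, because `(μ_t)_s = μ_s`. Causality may be
applied to `μ_t` since `μ_t ∈ Lip_C^σ`: it is disintegrated by the same Lipschitz family
`s ↦ μ(·|s)` over the renormalised restriction of `μ̄` to `[0, t]`, whose atom at `0` only grows.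
-/

section SliceBind

variable {X T : Type*} [MeasurableSpace X] [MeasurableSpace T]

lemma measurable_map_prodMk_right_of_isProbabilityMeasure {κ : T → Measure X}
    (hκ : Measurable κ) (hκp : ∀ s, IsProbabilityMeasure (κ s)) :
    Measurable fun s => (κ s).map fun x => (x, s) := by
  let K : ProbabilityTheory.Kernel T X := ⟨κ, hκ⟩
  have : ProbabilityTheory.IsMarkovKernel K := ⟨hκp⟩
  refine Measure.measurable_of_measurable_coe _ fun A hA => ?_
  simp_rw [Measure.map_apply measurable_prodMk_right hA]
  exact ProbabilityTheory.Kernel.measurable_kernel_prodMk_right (κ := K) hA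

lemma bind_map_prodMk_restrict_preimage_snd (ν : Measure T) {κ : T → Measure X}
    (hκ : Measurable fun s => (κ s).map fun x => (x, s)) {I : Set T} (hI : MeasurableSet I) :
    (ν.bind fun s => (κ s).map fun x => (x, s)).restrict (Prod.snd ⁻¹' I)
      = (ν.restrict I).bind fun s => (κ s).map fun x => (x, s) := by
  ext A hA
  rw [Measure.restrict_apply hA, Measure.bind_apply (hA.inter (measurable_snd hI))
    hκ.aemeasurable, Measure.bind_apply hA hκ.aemeasurable, ← lintegral_indicator hI]
  refine lintegral_congr fun s => ?_
  rw [Measure.map_apply measurable_prodMk_right (hA.inter (measurable_snd hI))]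
  by_cases hs : s ∈ I
  · simp [hs, Measure.map_apply measurable_prodMk_right hA, preimage_preimage]
  · simp [hs, preimage_preimage]

end SliceBind

section Masking

variable {m : ℕ}

lemma maskedM_eq (μ : Measure (E m × ℝ)) (t : ℝ) :
    maskedM μ t = (μ (Prod.snd ⁻¹' Icc 0 t))⁻¹ • μ.restrict (Prod.snd ⁻¹' Icc 0 t) := by
  rw [maskedM, univ_prod]

lemma maskedM_absolutelyContinuous (μ : Measure (E m × ℝ)) (t : ℝ) : maskedM μ t ≪ μ :=
  (Measure.absolutelyContinuous_of_le Measure.restrict_le_self).smul_left _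

lemma isProbabilityMeasure_maskedM (μ : Measure (E m × ℝ)) [IsFiniteMeasure μ] {t : ℝ}
    (h : μ (Prod.snd ⁻¹' Icc 0 t) ≠ 0) : IsProbabilityMeasure (maskedM μ t) :=
  ⟨by rw [maskedM_eq, Measure.smul_apply, Measure.restrict_apply_univ, smul_eq_mul,
    ENNReal.inv_mul_cancel h (measure_ne_top _ _)]⟩

lemma timeMarg_maskedM (μ : Measure (E m × ℝ)) (t : ℝ) :
    timeMarg (maskedM μ t)
      = (μ (Prod.snd ⁻¹' Icc 0 t))⁻¹ • (timeMarg μ).restrict (Icc 0 t) := by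
  rw [maskedM_eq, timeMarg, timeMarg, Measure.map_smul,
    Measure.restrict_map measurable_snd measurableSet_Icc]

lemma maskedM_map (μ : Measure (E m × ℝ)) {f : E m × ℝ → E m × ℝ} (hf : Measurable f)
    (hf_snd : ∀ q, (f q).2 = q.2) (t : ℝ) : maskedM (μ.map f) t = (maskedM μ t).map f := by
  have hpre : f ⁻¹' (Prod.snd ⁻¹' Icc 0 t) = Prod.snd ⁻¹' Icc 0 t := by
    ext q; simp [hf_snd]
  have hS : MeasurableSet (Prod.snd ⁻¹' Icc (0 : ℝ) t : Set (E m × ℝ)) :=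
    measurable_snd measurableSet_Icc
  rw [maskedM_eq, maskedM_eq, Measure.map_apply hf hS, Measure.restrict_map hf hS, hpre,
    Measure.map_smul]

lemma maskedM_maskedM (μ : Measure (E m × ℝ)) [IsFiniteMeasure μ] {s t : ℝ} (hst : s ≤ t)
    (h : μ (Prod.snd ⁻¹' Icc 0 t) ≠ 0) : maskedM (maskedM μ t) s = maskedM μ s := by
  set c := μ (Prod.snd ⁻¹' Icc 0 t)
  have hS : ∀ r : ℝ, MeasurableSet (Prod.snd ⁻¹' Icc (0 : ℝ) r : Set (E m × ℝ)) :=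
    fun r => measurable_snd measurableSet_Icc
  have hsub : (Prod.snd ⁻¹' Icc 0 s : Set (E m × ℝ)) ⊆ Prod.snd ⁻¹' Icc 0 t :=
    preimage_mono (Icc_subset_Icc le_rfl hst)
  have hc : c ≠ ∞ := measure_ne_top _ _
  rw [maskedM_eq (maskedM μ t), maskedM_eq μ t, Measure.smul_apply,
    Measure.restrict_apply (hS s), inter_eq_self_of_subset_left hsub, Measure.restrict_smul,
    Measure.restrict_restrict (hS s), inter_eq_self_of_subset_left hsub, smul_smul,
    smul_eq_mul, ENNReal.mul_inv (.inl (ENNReal.inv_ne_zero.mpr hc)) (.inl (by simpa)),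
    inv_inv, mul_comm c, mul_assoc, ENNReal.mul_inv_cancel h hc, mul_one, maskedM_eq]

end Masking

section LipCtx

variable {m : ℕ} {Ω : Set (E m)} {C σ : ℝ} {μ : Measure (E m × ℝ)}

lemma IsLipCtx.ofReal_le_measure_preimage_snd_Icc (h : IsLipCtx Ω C σ μ) {t : ℝ}
    (ht : 0 ≤ t) : ENNReal.ofReal σ ≤ μ (Prod.snd ⁻¹' Icc 0 t) :=
  h.2.2.1.trans <| (Measure.map_apply measurable_snd (measurableSet_singleton 0)).trans_le
    (measure_mono (preimage_mono (singleton_subset_iff.mpr (left_mem_Icc.mpr ht))))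

lemma IsLipCtx.measure_preimage_snd_Icc_ne_zero (h : IsLipCtx Ω C σ μ) (hσ : 0 < σ) {t : ℝ}
    (ht : 0 ≤ t) : μ (Prod.snd ⁻¹' Icc 0 t) ≠ 0 := fun h0 => by
  simpa [h0, hσ.not_ge] using h.ofReal_le_measure_preimage_snd_Icc ht

lemma isLipCtx_maskedM (h : IsLipCtx Ω C σ μ) (hσ : 0 < σ) {t : ℝ} (ht : 0 ≤ t) :
    IsLipCtx Ω C σ (maskedM μ t) := by
  have hc := h.measure_preimage_snd_Icc_ne_zero hσ ht
  obtain ⟨hprob, hsupp, hσ0, κ, hκ, hκp, hκΩ, hdis, hlip⟩ := h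
  set g : ℝ → Measure (E m × ℝ) := fun s => (κ s).map fun x => (x, s)
  have hg : Measurable g := measurable_map_prodMk_right_of_isProbabilityMeasure hκ hκp
  refine ⟨isProbabilityMeasure_maskedM μ hc, maskedM_absolutelyContinuous μ t hsupp, ?_,
    κ, hκ, hκp, hκΩ, ?_, hlip⟩
  · rw [timeMarg_maskedM, Measure.smul_apply, Measure.restrict_apply (measurableSet_singleton 0),
      singleton_inter_of_mem (left_mem_Icc.mpr ht), smul_eq_mul]
    exact hσ0.trans (le_mul_of_one_le_left zero_le (ENNReal.one_le_inv.mpr prob_le_one))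
  · rw [timeMarg_maskedM, Measure.bind_smul,
      ← bind_map_prodMk_restrict_preimage_snd _ hg measurableSet_Icc, ← hdis, maskedM_eq]

lemma IsLipCtx.ae_maskedM (h : IsLipCtx Ω C σ μ) (t : ℝ) :
    ∀ᵐ q ∂maskedM μ t, q.1 ∈ Ω ∧ q.2 ∈ Icc 0 t := by
  rw [maskedM_eq]
  refine Measure.ae_smul_measure ?_ _
  filter_upwards [ae_restrict_mem (measurable_snd measurableSet_Icc),
    ae_restrict_of_ae (mem_ae_iff.mpr h.2.1)] with q hqt hq
  exact ⟨hq.1, hqt⟩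

lemma IsCausalM.apply_maskedM_of_le {d' : ℕ} {Λ : STMap m d'} (hΛ : IsCausalM Ω C σ Λ)
    (hσ : 0 < σ) (hμ : IsLipCtx Ω C σ μ) {x : E m} (hx : x ∈ Ω) {s t : ℝ} (hs : s ∈ Icc 0 t)
    (ht : t ≤ 1) : Λ (maskedM μ t) (x, s) = Λ μ (x, s) := by
  have hs1 : s ∈ Icc (0 : ℝ) 1 := ⟨hs.1, hs.2.trans ht⟩
  have ht0 : 0 ≤ t := hs.1.trans hs.2
  have : IsProbabilityMeasure μ := hμ.1
  rw [hΛ _ (isLipCtx_maskedM hμ hσ ht0) x hx s hs1,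
    maskedM_maskedM μ hs.2 (hμ.measure_preimage_snd_Icc_ne_zero hσ ht0), ← hΛ μ hμ x hx s hs1]

end LipCtx

theorem masked_pushforward_comm_general {d : ℕ} (Ω : Set (E d))
    {C σ : ℝ} (hσ : σ ∈ Ioo (0:ℝ) 1)
    (Γ₁ : STMap d d) (hcausal : IsCausalM Ω C σ Γ₁)
    (hmeas : ∀ ν : Measure (E d × ℝ), Measurable fun q : E d × ℝ => (Γ₁ ν q, q.2)) :
    ∀ μ : Measure (E d × ℝ), IsLipCtx Ω C σ μ → ∀ t ∈ Icc (0:ℝ) 1,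
      maskedM (μ.map fun q => (Γ₁ μ q, q.2)) t
        = (maskedM μ t).map fun q => (Γ₁ (maskedM μ t) q, q.2) := by
  intro μ hμ t ht
  rw [maskedM_map μ (hmeas μ) (fun _ => rfl)]
  refine Measure.map_congr ?_
  filter_upwards [hμ.ae_maskedM t] with ⟨x, s⟩ ⟨hx, hs⟩
  rw [hcausal.apply_maskedM_of_le hσ.1 hμ hx hs ht.2]

/-- **Masking commutes with causal push-forward.** For a causal space-time in-context map
`Γ₁` with values in `ℝ^d`, every `μ ∈ Lip_C^σ(Ω̃)` and every `t ∈ [0,1]`, the masked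
measure of the push-forward equals the push-forward of the masked measure:
`[(Γ₁(μ), Id)♯μ]_t = (Γ₁(μ_t), Id)♯μ_t`. -/
theorem masked_pushforward_comm {d : ℕ} (Ω : Set (E d)) (hΩ : IsCompact Ω)
    {C σ : ℝ} (hC : 0 < C) (hσ : σ ∈ Ioo (0:ℝ) 1)
    (Γ₁ : STMap d d) (hcausal : IsCausalM Ω C σ Γ₁)
    (hmeas : ∀ ν : Measure (E d × ℝ), Measurable fun q : E d × ℝ => (Γ₁ ν q, q.2)) :
    ∀ μ : Measure (E d × ℝ), IsLipCtx Ω C σ μ → ∀ t ∈ Icc (0:ℝ) 1,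
      maskedM (μ.map fun q => (Γ₁ μ q, q.2)) t
        = (maskedM μ t).map fun q => (Γ₁ (maskedM μ t) q, q.2) :=
  masked_pushforward_comm_general Ω hσ Γ₁ hcausal hmeas
end

section
/- Let Ω ⊂ ℝ^d be compact, let Φ : ℝ^{2d'} → ℝ^{d'} be any map, and let T, N ∈ ℕ and parameters (θ̃_{t,n}, ξ̃_{t,n}) be given, where F_{ξ̃_{t,n}}(x) = A_{t,n}x + b_{t,n} is affine from ℝ^d to ℝ^{d'} and Γ_{θ̃_{t,n}} is the multi-head attention with d_in = d', d_head = k = 1, H = d' whose h-th head has W̃^h = e_h, and Ṽ^h, Q̃^h, K̃^h supported on the h-th coordinate. Then there exist context-free tokenwise layers F_{ξ_0}, (F_{ξ_{t,n}})_{t∈[T],n∈[N]}, F_{ξ_*} (each built from affine maps and applications of Φ) and attention parameters θ_0, (θ_{t,n}), θ_* such that for all (μ, x) ∈ P(Ω) × Ω, G_Φ(μ, x) = F_{ξ_*} ⋄ Γ_{θ_*} ⋄ (⋄_{n=1}^N ⋄_{t=1}^T F_{ξ_{t,n}} ⋄ Γ_{θ_{t,n}}) ⋄ F_{ξ_0}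 ⋄ Γ_{θ_0}(μ, x) exactly, with d_in(θ_0) = d, d_head(θ_0) = k(θ_0) = H(θ_0) = 1; d_in(θ_{t,n}) = d + 3d', d_head(θ_{t,n}) = k(θ_{t,n}) = 1, H(θ_{t,n}) = d'; and d_in(θ_*) = d + 3d', d_head(θ_*) = k(θ_*) = H(θ_*) = 1. -/
open MeasureTheory Set Filter
open scoped ENNReal RealInnerProductSpace BigOperators Topology

/-!
A token of `ℝ^{d+3d'}` carries the input position `y`, a constant `1`, one real "code" and a
scratch block `ℝ^{d'}`. Thanks to the constant, `y ↦ A y + b` is linear in the token, so an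
attention whose `Q, K, V` first apply this map and whose `W` writes into the scratch block
computes `Γ_θ̃(F_ξ̃♯μ, F_ξ̃(y)) - F_ξ̃(y)` there (`attention_conj`). The map `Φ` is arbitrary, in
particular possibly non-measurable, so applying it in an intermediate layer would destroy the
push-forward contexts seen by the next attentions. Instead each tokenwise layer records the
freshly computed value in a table `Fin T × Fin N → ℝ^{d'}` kept in the code coordinate through a
Borel embedding of the table into `ℝ`; only the last layer decodes the table and evaluates
`Σₙ Φ(v_T, ⋯ Φ(v_1, 𝟏))`.
-/

noncomputable section

namespace AttentionParams

variable {m m' dh k H : ℕ}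

instance : Zero (AttentionParams m dh k H) := ⟨⟨0, 0, 0, 0⟩⟩

def conj (θ : AttentionParams m dh k H) (P : E m' →L[ℝ] E m) (J : E m →L[ℝ] E m') :
    AttentionParams m' dh k H :=
  ⟨fun h => J ∘L θ.W h, fun h => θ.Q h ∘L P, fun h => θ.K h ∘L P, fun h => θ.V h ∘L P⟩

end AttentionParams

section Attention

variable {m m' dh k H : ℕ}

@[simp]
theorem attention_zero (ν : Measure (E m)) (x : E m) :
    attention (0 : AttentionParams m dh k H) ν x = x := by
  simp [attention, show (0 : AttentionParams m dh k H).W = 0 from rfl]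

theorem measurable_attention (θ : AttentionParams m dh k H) (ν : Measure (E m)) [SFinite ν] :
    Measurable (attention θ ν) := by
  have hscore : ∀ h, Continuous fun p : E m × E m =>
      Real.exp (⟪θ.Q h p.1, θ.K h p.2⟫ / Real.sqrt k) := fun h => by fun_prop
  have hden : ∀ h, Measurable fun x => ∫ z, Real.exp (⟪θ.Q h x, θ.K h z⟫ / Real.sqrt k) ∂ν :=
    fun h => (hscore h).stronglyMeasurable.integral_prod_right'.measurable
  have hnum : ∀ h, Measurable fun x =>
      ∫ y, Real.exp (⟪θ.Q h x, θ.K h y⟫ / Real.sqrt k) • θ.V h y ∂ν := fun h =>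
    ((hscore h).smul ((θ.V h).continuous.comp continuous_snd)).stronglyMeasurable
      |>.integral_prod_right'.measurable
  have heq : attention θ ν = fun x => x + ∑ h, θ.W h
      ((∫ z, Real.exp (⟪θ.Q h x, θ.K h z⟫ / Real.sqrt k) ∂ν)⁻¹ •
        ∫ y, Real.exp (⟪θ.Q h x, θ.K h y⟫ / Real.sqrt k) • θ.V h y ∂ν) := by
    funext x
    simp only [attention, div_eq_inv_mul, mul_smul, integral_smul]
  rw [heq]
  exact measurable_id.add <| Finset.measurable_sum _ fun h _ =>
    (θ.W h).continuous.measurable.comp (((hden h).inv).smul (hnum h))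

theorem attention_conj (θ : AttentionParams m dh k H) (P : E m' →L[ℝ] E m)
    (J : E m →L[ℝ] E m') (ν : Measure (E m')) (x : E m') :
    attention (θ.conj P J) ν x = x + J (attention θ (ν.map P) (P x) - P x) := by
  have hP : AEMeasurable P ν := P.continuous.aemeasurable
  have hden : ∀ h, ∫ z, Real.exp (⟪θ.Q h (P x), θ.K h z⟫ / Real.sqrt k) ∂(ν.map P)
      = ∫ z, Real.exp (⟪θ.Q h (P x), θ.K h (P z)⟫ / Real.sqrt k) ∂ν := fun h =>
    integral_map hP (by fun_prop)
  simp only [attention, AttentionParams.conj, add_sub_cancel_left, map_sum,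
    ContinuousLinearMap.comp_apply, hden]
  congr 1
  refine Finset.sum_congr rfl fun h _ => ?_
  rw [integral_map hP (by fun_prop)]

end Attention

theorem compList_cons_apply {m : ℕ} (l : ICMap m m) (ls : List (ICMap m m))
    (ν : Measure (E m)) (x : E m) :
    compList (l :: ls) ν x = compList ls (ν.map (l ν)) (l ν x) := rfl

theorem ictxComp_ctxFree_attention_zero {m m' dh k H : ℕ} (F : E m → E m') :
    ictxComp (ctxFree F) (attention (0 : AttentionParams m dh k H)) = fun _ => F := by
  funext ν x
  simp [ictxComp, ctxFree]

theorem exists_leftInverse_of_finrank_le {V W : Type*} [NormedAddCommGroup V] [NormedSpace ℝ V]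
    [FiniteDimensional ℝ V] [NormedAddCommGroup W] [NormedSpace ℝ W] [FiniteDimensional ℝ W]
    (h : Module.finrank ℝ V ≤ Module.finrank ℝ W) :
    ∃ (i : V →L[ℝ] W) (r : W →L[ℝ] V), Function.LeftInverse r i := by
  let e : W ≃L[ℝ] V × (Fin (Module.finrank ℝ W - Module.finrank ℝ V) → ℝ) :=
    ContinuousLinearEquiv.ofFinrankEq (by simp [Module.finrank_prod]; omega)
  exact ⟨e.symm.toContinuousLinearMap ∘L .inl ℝ _ _, .fst ℝ _ _ ∘L e.toContinuousLinearMap,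
    fun v => by simp⟩

section RealCode

variable (X : Type*) [MeasurableSpace X] [StandardBorelSpace X] [Nonempty X]

def decodeReal : ℝ → X :=
  Function.extend (embeddingReal X) id fun _ => Classical.arbitrary X

@[simp]
theorem decodeReal_embeddingReal (x : X) : decodeReal X (embeddingReal X x) = x :=
  (measurableEmbedding_embeddingReal X).injective.extend_apply _ _ _

theorem measurable_decodeReal : Measurable (decodeReal X) :=
  (measurableEmbedding_embeddingReal X).measurable_extend measurable_id measurable_const

end RealCode

section Construction

variable {d d' D : ℕ} {ι : Type*} [Countable ι]
  (emb : E d × ℝ × ℝ × E d' →L[ℝ] E D) (read : E D →L[ℝ] E d × ℝ × ℝ × E d')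

def token (W : ι → E d') (y : E d) : E D :=
  emb (y, 1, embeddingReal (ι → E d') W, 0)

def scratchEmb : E d' →L[ℝ] E D :=
  emb ∘L .inr ℝ _ _ ∘L .inr ℝ _ _ ∘L .inr ℝ _ _

def readAffine (A : E d →L[ℝ] E d') (b : E d') : E D →L[ℝ] E d' :=
  (A ∘L .fst ℝ _ _ + (ContinuousLinearMap.fst ℝ _ _ ∘L .snd ℝ _ _).smulRight b) ∘L read

def recordStep [DecidableEq ι] (p : ι) (A : E d →L[ℝ] E d') (b : E d') (z : E D) : E D :=
  token emb (Function.update (decodeReal (ι → E d') (read z).2.2.1) p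
    (A (read z).1 + b + (read z).2.2.2)) (read z).1

theorem measurable_token {W : E d → ι → E d'} (hW : Measurable W) :
    Measurable fun y => token (ι := ι) emb (W y) y :=
  emb.continuous.measurable.comp <| measurable_id.prodMk <| measurable_const.prodMk <|
    ((measurable_embeddingReal _).comp hW).prodMk measurable_const

theorem measurable_recordStep [DecidableEq ι] (p : ι) (A : E d →L[ℝ] E d') (b : E d') :
    Measurable (recordStep emb read p A b) := by
  have hr := read.continuous.measurable
  refine emb.continuous.measurable.comp <| (measurable_fst.comp hr).prodMk <|
    measurable_const.prodMk <| ((measurable_embeddingReal _).comp ?_).prodMk measurable_const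
  exact measurable_update'.comp <|
    ((measurable_decodeReal _).comp (by fun_prop)).prodMk (by fun_prop)

variable {emb read}

theorem readAffine_token (hread : Function.LeftInverse read emb) (A : E d →L[ℝ] E d')
    (b : E d') (W : ι → E d') (y : E d) : readAffine read A b (token emb W y) = A y + b := by
  simp [readAffine, token, hread _]

end Construction

section Layers

variable {d d' D dh k H : ℕ} {ι : Type*} [Countable ι] [DecidableEq ι]
  {emb : E d × ℝ × ℝ × E d' →L[ℝ] E D} {read : E D →L[ℝ] E d × ℝ × ℝ × E d'}

variable (emb read) in
def recordLayer (θ : AttentionParams d' dh k H) (p : ι) (A : E d →L[ℝ] E d') (b : E d') :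
    ICMap D D :=
  ictxComp (ctxFree (recordStep emb read p A b))
    (attention (θ.conj (readAffine read A b) (scratchEmb emb)))

theorem measurable_recordLayer (θ : AttentionParams d' dh k H) (p : ι) (A : E d →L[ℝ] E d')
    (b : E d') (ν : Measure (E D)) [IsFiniteMeasure ν] :
    Measurable (recordLayer emb read θ p A b ν) :=
  (measurable_recordStep emb read p A b).comp (measurable_attention _ ν)

theorem recordLayer_token (hread : Function.LeftInverse read emb) (θ : AttentionParams d' dh k H)
    (p : ι) (A : E d →L[ℝ] E d') (b : E d') (μ : Measure (E d)) {W : E d → ι → E d'}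
    (hW : Measurable W) (y : E d) :
    recordLayer emb read θ p A b (μ.map fun y => token emb (W y) y) (token emb (W y) y)
      = token emb (Function.update (W y) p
          (attention θ (μ.map fun y => A y + b) (A y + b))) y := by
  have hmap : (μ.map fun y => token emb (W y) y).map (readAffine read A b)
      = μ.map fun y => A y + b := by
    rw [Measure.map_map (readAffine read A b).continuous.measurable (measurable_token emb hW)]
    exact congrArg (μ.map ·) (funext fun y => readAffine_token hread A b (W y) y)
  have hscratch : ∀ u, token emb (W y) y + scratchEmb emb u
      = emb (y, 1, embeddingReal (ι → E d') (W y), u) := fun u => by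
    simp [token, scratchEmb, ← map_add]
  simp only [recordLayer, ictxComp, ctxFree, attention_conj, hmap, readAffine_token hread,
    hscratch, recordStep, hread _, decodeReal_embeddingReal, add_sub_cancel]

theorem compList_recordLayers (hread : Function.LeftInverse read emb)
    (θ : ι → AttentionParams d' dh k H) (A : ι → E d →L[ℝ] E d') (b : ι → E d')
    (μ : Measure (E d)) [IsFiniteMeasure μ] (ps : List ι) {W : E d → ι → E d'}
    (hW : Measurable W) (x : E d) :
    compList (ps.map fun p => recordLayer emb read (θ p) p (A p) (b p))
        (μ.map fun y => token emb (W y) y) (token emb (W x) x)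
      = token emb (fun q => if q ∈ ps then
          attention (θ q) (μ.map fun y => A q y + b q) (A q x + b q) else W x q) x := by
  induction ps generalizing W with
  | nil => simp [compList]
  | cons p ps ih =>
    set value := fun y => attention (θ p) (μ.map fun y => A p y + b p) (A p y + b p)
    have hvalue : Measurable value :=
      (measurable_attention _ _).comp ((A p).continuous.measurable.add_const _)
    have hW' : Measurable fun y => Function.update (W y) p (value y) :=
      measurable_update'.comp (hW.prodMk hvalue)
    have hstep : recordLayer emb read (θ p) p (A p) (b p) (μ.map fun y => token emb (W y) y) ∘
        (fun y => token emb (W y) y) = fun y => token emb (Function.update (W y) p (value y)) y :=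
      funext (recordLayer_token hread (θ p) p (A p) (b p) μ hW)
    rw [List.map_cons, compList_cons_apply,
      Measure.map_map (measurable_recordLayer _ _ _ _ _) (measurable_token emb hW), hstep,
      recordLayer_token hread (θ p) p (A p) (b p) μ hW x, ih hW']
    congr 1
    funext q
    by_cases hq : q = p
    · subst hq; simp [value]
    · simp [hq]

end Layers

end

theorem exact_representation_general {d d' : ℕ} (Ω : Set (E d))
    (Φ : E d' × E d' → E d')
    (T N : ℕ) (θ : Fin T → Fin N → AttentionParams d' 1 1 d')
    (A : Fin T → Fin N → (E d →L[ℝ] E d')) (b : Fin T → Fin N → E d') :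
    ∃ (θ₀ : AttentionParams d 1 1 1) (F₀ : E d → E (d + 3 * d'))
      (θmid : Fin T → Fin N → AttentionParams (d + 3 * d') 1 1 d')
      (Fmid : Fin T → Fin N → (E (d + 3 * d') → E (d + 3 * d')))
      (θs : AttentionParams (d + 3 * d') 1 1 1) (Fs : E (d + 3 * d') → E d'),
      ∀ (μ : ProbabilityMeasure Ω) (x : Ω),
        (ictxComp (ctxFree Fs)
            (ictxComp (attention θs)
              (ictxComp
                (compList ((List.finRange N).flatMap fun n =>
                  (List.finRange T).map fun t =>
                    ictxComp (ctxFree (Fmid t n)) (attention (θmid t n))))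
                (ictxComp (ctxFree F₀) (attention θ₀)))))
          (μ.toMeasure.map Subtype.val) (x : E d)
        = ∑ n : Fin N, nestPhi Φ T fun t : Fin T =>
            attention (θ t n)
              ((μ.toMeasure.map Subtype.val).map fun y => A t n y + b t n)
              (A t n (x : E d) + b t n) := by
  rcases Nat.eq_zero_or_pos d' with rfl | hd'
  · exact ⟨0, 0, 0, fun _ _ => id, 0, 0, fun _ _ => Subsingleton.elim _ _⟩
  obtain ⟨emb, read, hread⟩ := exists_leftInverse_of_finrank_le
    (V := E d × ℝ × ℝ × E d') (W := E (d + 3 * d')) (by simp [Module.finrank_prod]; omega)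
  let ps := (List.finRange N).flatMap fun n => (List.finRange T).map fun t => (t, n)
  refine ⟨0, token emb (0 : Fin T × Fin N → E d'),
    fun t n => (θ t n).conj (readAffine read (A t n) (b t n)) (scratchEmb emb),
    fun t n => recordStep emb read (t, n) (A t n) (b t n), 0,
    fun z => ∑ n, nestPhi Φ T fun t => decodeReal (Fin T × Fin N → E d') (read z).2.2.1 (t, n),
    fun μ x => ?_⟩
  have hlayers : ((List.finRange N).flatMap fun n => (List.finRange T).map fun t =>
      ictxComp (ctxFree (recordStep emb read (t, n) (A t n) (b t n)))
        (attention ((θ t n).conj (readAffine read (A t n) (b t n)) (scratchEmb emb))))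
      = ps.map fun p => recordLayer emb read (θ p.1 p.2) p (A p.1 p.2) (b p.1 p.2) := by
    simp [ps, List.map_flatMap, recordLayer, Function.comp_def]
  have hrun := compList_recordLayers hread (fun p => θ p.1 p.2) (fun p => A p.1 p.2)
    (fun p => b p.1 p.2) (μ.toMeasure.map Subtype.val) ps (W := fun _ => 0) measurable_const x
  simp only [ictxComp_ctxFree_attention_zero]
  simp only [ictxComp, ctxFree, attention_zero, hlayers, hrun]
  simp [token, hread _, ps]

/-- **Exact representation of `G_Φ` by a deep transformer (Lemma 10).** Given any map
`Φ : ℝ^{2d'} → ℝ^{d'}`, affine maps `F_{ξ̃ₜₙ}(x) = Aₜₙ x + bₜₙ` and attentions `Γ_{θ̃ₜₙ}`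
with `d_in = d'`, `d_head = k = 1`, `H = d'`, whose `h`-th head has `W̃ʰ = eₕ` and
`Ṽʰ, Q̃ʰ, K̃ʰ` supported on the `h`-th coordinate, there are context-free tokenwise layers
`F_{ξ₀}, (F_{ξₜₙ}), F_*` and attentions `θ₀, (θₜₙ), θ_*` with the stated dimensions such
that `G_Φ = F_{ξ_*} ⋄ Γ_{θ_*} ⋄ (⋄ₙ ⋄ₜ F_{ξₜₙ} ⋄ Γ_{θₜₙ}) ⋄ F_{ξ₀} ⋄ Γ_{θ₀}` exactly. -/
theorem exact_representation {d d' : ℕ} (Ω : Set (E d)) (hΩ : IsCompact Ω)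
    (Φ : E d' × E d' → E d')
    (T N : ℕ) (θ : Fin T → Fin N → AttentionParams d' 1 1 d')
    (A : Fin T → Fin N → (E d →L[ℝ] E d')) (b : Fin T → Fin N → E d')
    (hW : ∀ t n (h : Fin d') (u : E 1),
      (θ t n).W h u = u 0 • EuclideanSpace.single h (1:ℝ))
    (v q k : Fin T → Fin N → Fin d' → ℝ)
    (hV : ∀ t n (h : Fin d') (y : E d'),
      (θ t n).V h y = toE fun _ : Fin 1 => v t n h * y h)
    (hQ : ∀ t n (h : Fin d') (y : E d'),
      (θ t n).Q h y = toE fun _ : Fin 1 => q t n h * y h)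
    (hK : ∀ t n (h : Fin d') (y : E d'),
      (θ t n).K h y = toE fun _ : Fin 1 => k t n h * y h) :
    ∃ (θ₀ : AttentionParams d 1 1 1) (F₀ : E d → E (d + 3 * d'))
      (θmid : Fin T → Fin N → AttentionParams (d + 3 * d') 1 1 d')
      (Fmid : Fin T → Fin N → (E (d + 3 * d') → E (d + 3 * d')))
      (θs : AttentionParams (d + 3 * d') 1 1 1) (Fs : E (d + 3 * d') → E d'),
      ∀ (μ : ProbabilityMeasure Ω) (x : Ω),
        (ictxComp (ctxFree Fs)
            (ictxComp (attention θs)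
              (ictxComp
                (compList ((List.finRange N).flatMap fun n =>
                  (List.finRange T).map fun t =>
                    ictxComp (ctxFree (Fmid t n)) (attention (θmid t n))))
                (ictxComp (ctxFree F₀) (attention θ₀)))))
          (μ.toMeasure.map Subtype.val) (x : E d)
        = ∑ n : Fin N, nestPhi Φ T fun t : Fin T =>
            attention (θ t n)
              ((μ.toMeasure.map Subtype.val).map fun y => A t n y + b t n)
              (A t n (x : E d) + b t n) :=
  exact_representation_general Ω Φ T N θ A b
end
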